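/- The infinite program E1 consisting of the fact even(0), the rules even(n+2) :- even(n) for all natural numbers n, and the rule q :- min{X : even(X)} = 0, has exactly one Alog answer set, namely {q} ∪ {even(2k) : k ∈ ℕ}. -/
import Mathlib


/-- Atoms of program E1: `q` and `even n` for `n : ℕ`. -/
inductive AtomE1 : Type
  | q : AtomE1
  | even : ℕ → AtomE1
deriving DecidableEq

/-- `B` satisfies the Alog set reduct of
E1 = { even(0).  even(n+2) :- even(n) (for all n).  q :- min{X:even(X)} = 0 }
with respect to candidate set `A`.  The aggregate `min{X:even(X)} = 0` is defined and
true in `A` iff `0` is the least element of `{n | even n ∈ A}`; in that case the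
aggregate is replaced by the (possibly infinite) body `{even n : even n ∈ A}`. -/
def SatisfiesReductE1 (A B : Set AtomE1) : Prop :=
  AtomE1.even 0 ∈ B ∧
  (∀ n, AtomE1.even n ∈ B → AtomE1.even (n + 2) ∈ B) ∧
  (IsLeast {n | AtomE1.even n ∈ A} 0 →
    ((∀ n, AtomE1.even n ∈ A → AtomE1.even n ∈ B) → AtomE1.q ∈ B))

/-- `A` is an Alog answer set of E1: a minimal model of the set reduct of E1 w.r.t. `A`. -/
def IsAnswerSetE1 (A : Set AtomE1) : Prop :=
  SatisfiesReductE1 A A ∧ ∀ B ⊂ A, ¬ SatisfiesReductE1 A B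

lemma evens_in (B : Set AtomE1) (h0 : AtomE1.even 0 ∈ B)
    (hstep : ∀ n, AtomE1.even n ∈ B → AtomE1.even (n + 2) ∈ B) :
    ∀ k, AtomE1.even (2 * k) ∈ B := by
  intro k
  induction k with
  | zero => simpa using h0
  | succ k ih => have := hstep _ ih; simpa [Nat.mul_succ] using this

/-- E1 has exactly one Alog answer set, namely `{q} ∪ {even(2k) : k ∈ ℕ}`. -/
theorem E1_unique_answer_set :
    ∀ A : Set AtomE1,
      IsAnswerSetE1 A ↔ A = {AtomE1.q} ∪ {a | ∃ k, a = AtomE1.even (2 * k)} := by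
  intro A
  set S : Set AtomE1 := {AtomE1.q} ∪ {a | ∃ k, a = AtomE1.even (2 * k)} with hS
  constructor
  · rintro ⟨⟨h0, hstep, hagg⟩, hmin⟩
    have hleast : IsLeast {n | AtomE1.even n ∈ A} 0 :=
      ⟨h0, fun n _ => Nat.zero_le n⟩
    have hq : AtomE1.q ∈ A := hagg hleast (fun _ h => h)
    have hSsub : S ⊆ A := by
      rintro a (rfl | ⟨k, rfl⟩)
      · exact hq
      · exact evens_in A h0 hstep k
    by_contra hne
    have hssub : S ⊂ A := ⟨hSsub, fun hAS => hne (le_antisymm hAS hSsub)⟩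
    refine hmin S hssub ⟨Or.inr ⟨0, rfl⟩, ?_, fun _ _ => Or.inl rfl⟩
    rintro n (h | ⟨k, hk⟩)
    · exact absurd h (by simp)
    · exact Or.inr ⟨k + 1, by cases AtomE1.even.inj hk; ring_nf⟩
  · rintro rfl
    refine ⟨⟨Or.inr ⟨0, rfl⟩, ?_, fun _ _ => Or.inl rfl⟩, ?_⟩
    · rintro n (h | ⟨k, hk⟩)
      · exact absurd h (by simp)
      · exact Or.inr ⟨k + 1, by cases AtomE1.even.inj hk; ring_nf⟩
    · rintro B ⟨hBsub, hBne⟩ ⟨h0, hstep, hagg⟩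
      apply hBne
      intro a ha
      rcases ha with rfl | ⟨k, rfl⟩
      · refine hagg ⟨Or.inr ⟨0, rfl⟩, fun n _ => Nat.zero_le n⟩ ?_
        rintro n (h | ⟨k, hk⟩)
        · exact absurd h (by simp)
        · cases AtomE1.even.inj hk; exact evens_in B h0 hstep k
      · exact evens_in B h0 hstep k
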